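/- Uniform RCMs are dense among RCMs in the following sense: for any RCM R and ε > 0, there is an RCM R' with uniform distribution on its units whose counterfactual distribution is within ε of that of R in the sup (L∞) metric on probability distributions over the finite set of counterfactuals. -/
import Mathlib


open scoped Classical

/-- An intervention: a partial assignment of values to variables. -/
def Itv (V : Type*) (Val : V → Type*) := ∀ v, Option (Val v)

/-- A potential outcome `Y_x`: an outcome variable together with an intervention. -/
structure PO (V : Type*) (Val : V → Type*) where
  Y : V
  x : Itv V Val

/-- A Rubin causal model (with a probability distribution on its units). -/
structure RCM (U : Type*) (V : Type*) (Val : V → Type*) where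
  O : Set (PO V Val)
  F : (o : PO V Val) → U → Val o.Y
  P : U → ℝ
  P_nonneg : ∀ u, 0 ≤ P u
  P_sum : ∑ᶠ u, P u = 1

/-- Joint valuations ("counterfactuals") of a set of potential outcomes. -/
def CFVal {V : Type*} {Val : V → Type*} (O : Set (PO V Val)) :=
  (o : O) → Val o.1.Y

/-- The (pushforward) counterfactual distribution of an RCM, computed on a set
of potential outcomes. -/
noncomputable def RCM.cfOn {U V : Type*} {Val : V → Type*} (R : RCM U V Val)
    (O : Set (PO V Val)) (g : CFVal O) : ℝ :=
  ∑ᶠ u, if ∀ o : O, R.F o.1 u = g o then R.P u else 0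

/-- The counterfactual distribution of an RCM on its own defined outcomes. -/
noncomputable def RCM.cf {U V : Type*} {Val : V → Type*} (R : RCM U V Val)
    (g : CFVal R.O) : ℝ := R.cfOn R.O g

/-- Effectiveness: intervened variables take their intervened values. -/
def RCM.Effective {U V : Type*} {Val : V → Type*} (R : RCM U V Val) : Prop :=
  ∀ o, o ∈ R.O → ∀ u, ∀ y : Val o.Y, o.x o.Y = some y → R.F o u = y

/-- Update an intervention at one variable. -/
noncomputable def upd {V : Type*} {Val : V → Type*} (x : Itv V Val) (Y : V) (y : Val Y) :
    Itv V Val :=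
  fun v => if h : v = Y then some (cast (congrArg Val h.symm) y) else x v

/-- Composition, at every unit, whenever the relevant outcomes are defined. -/
def RCM.Composition {U V : Type*} {Val : V → Type*} (R : RCM U V Val) : Prop :=
  ∀ (u : U) (Y Z : V) (w : Itv V Val),
    (⟨Y, w⟩ : PO V Val) ∈ R.O → (⟨Z, w⟩ : PO V Val) ∈ R.O →
    (⟨Z, upd w Y (R.F ⟨Y, w⟩ u)⟩ : PO V Val) ∈ R.O →
    R.F ⟨Z, upd w Y (R.F ⟨Y, w⟩ u)⟩ u = R.F ⟨Z, w⟩ u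

/-- Reversibility, at every unit, whenever the relevant outcomes are defined. -/
def RCM.Reversibility {U V : Type*} {Val : V → Type*} (R : RCM U V Val) : Prop :=
  ∀ (u : U) (Y Z : V) (w : Itv V Val) (y : Val Y) (z : Val Z), Y ≠ Z →
    (⟨Y, upd w Z z⟩ : PO V Val) ∈ R.O → (⟨Z, upd w Y y⟩ : PO V Val) ∈ R.O →
    (⟨Y, w⟩ : PO V Val) ∈ R.O →
    R.F ⟨Y, upd w Z z⟩ u = y → R.F ⟨Z, upd w Y y⟩ u = z →
    R.F ⟨Y, w⟩ u = y

/-- A structural causal model. -/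
structure SCM (Uex : Type*) (V : Type*) (Val : V → Type*) where
  Pa : V → Set V
  Pa_irr : ∀ v, v ∉ Pa v
  f : (v : V) → ((w : V) → Val w) → Uex → Val v
  f_dep : ∀ v a b u, (∀ w ∈ Pa v, a w = b w) → f v a u = f v b u
  P : Uex → ℝ
  P_nonneg : ∀ u, 0 ≤ P u
  P_sum : ∑ᶠ u, P u = 1

/-- `s` solves the manipulated model `M_x` under exogenous setting `u`. -/
def SCM.IsSol {Uex V : Type*} {Val : V → Type*} (M : SCM Uex V Val)
    (x : Itv V Val) (u : Uex) (s : ∀ w, Val w) : Prop :=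
  ∀ w, s w = (x w).getD (M.f w s u)

/-- `M` has a unique solution under every intervention and exogenous setting. -/
def SCM.Uniq {Uex V : Type*} {Val : V → Type*} (M : SCM Uex V Val) : Prop :=
  ∀ (x : Itv V Val) (u : Uex), ∃! s, M.IsSol x u s

/-- The potential outcome `Y_x(u)` of an SCM with unique solutions. -/
noncomputable def SCM.po {Uex V : Type*} {Val : V → Type*} (M : SCM Uex V Val)
    (h : M.Uniq) (o : PO V Val) (u : Uex) : Val o.Y :=
  (h o.x u).exists.choose o.Y

/-- The counterfactual distribution of an SCM on a set of potential outcomes. -/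
noncomputable def SCM.cf {Uex V : Type*} {Val : V → Type*} (M : SCM Uex V Val)
    (h : M.Uniq) (O : Set (PO V Val)) (g : CFVal O) : ℝ :=
  ∑ᶠ u, if ∀ o : O, M.po h o.1 u = g o then M.P u else 0

/-- `M` represents `R`: the counterfactual distribution of `M` marginalizes to
that of `R` on the outcomes defined by `R`. -/
def Represents {Uex U V : Type*} {Val : V → Type*} (M : SCM Uex V Val) (h : M.Uniq)
    (R : RCM U V Val) : Prop :=
  ∀ g : CFVal R.O, M.cf h R.O g = R.cf g

/-- `R` is representable by some SCM with unique solutions. -/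
def RCM.Representable {U V : Type*} {Val : V → Type*} (R : RCM U V Val) : Prop :=
  ∃ (Uex : Type) (M : SCM Uex V Val) (h : M.Uniq), Finite Uex ∧ Represents M h R

/-- `R'` extends `R`. -/
def RCM.Extends {U V : Type*} {Val : V → Type*} (R' R : RCM U V Val) : Prop :=
  R.O ⊆ R'.O ∧ (∀ o ∈ R.O, R'.F o = R.F o) ∧ R'.P = R.P

/-- A full RCM defines every potential outcome. -/
def RCM.Full {U V : Type*} {Val : V → Type*} (R : RCM U V Val) : Prop :=
  R.O = Set.univ

/-- `R'` is a submodel of `R`. -/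
def Submodel {U V : Type*} {Val : V → Type*} (R' R : RCM U V Val) : Prop :=
  R'.O ⊆ R.O ∧ (∀ o ∈ R'.O, R'.F o = R.F o) ∧ R'.P = R.P

set_option maxHeartbeats 1000000 in
/-- Uniform RCMs are dense: any RCM's counterfactual distribution can be
approximated within `ε` (in the sup metric) by one with a uniform unit
distribution. -/
theorem stmt1 {U V : Type} {Val : V → Type} [Finite U] [Finite V]
    [∀ v, Finite (Val v)] (R : RCM U V Val) (ε : ℝ) (hε : 0 < ε) :
    ∃ (U' : Type) (_ : Finite U') (R' : RCM U' V Val),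
      R'.O = R.O ∧ (∀ u u' : U', R'.P u = R'.P u') ∧
      ∀ g : CFVal R.O, |R'.cfOn R.O g - R.cf g| ≤ ε := by
  classical
  have hfin := Fintype.ofFinite U
  have hsum : ∑ u, R.P u = 1 := by
    rw [← finsum_eq_sum_of_fintype]; exact R.P_sum
  set c : ℕ := Fintype.card U with hc
  have hne : Nonempty U := by
    by_contra h
    rw [not_nonempty_iff] at h
    simp at hsum
  have hc1 : 1 ≤ c := Fintype.card_pos
  set N₀ : ℕ := max 1 ⌈(c : ℝ)^2 / ε⌉₊ with hN₀def
  have hN₀1 : 1 ≤ N₀ := le_max_left _ _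
  have hN₀pos : (0:ℝ) < N₀ := by exact_mod_cast hN₀1
  set n : U → ℕ := fun u => ⌈(N₀:ℝ) * R.P u⌉₊ with hndef
  set N : ℕ := ∑ u, n u with hNdef
  have hPle : ∀ u, R.P u ≤ 1 := fun u =>
    hsum ▸ Finset.single_le_sum (fun i _ => R.P_nonneg i) (Finset.mem_univ u)
  have hlb : ∀ u, (N₀:ℝ) * R.P u ≤ n u := fun u => Nat.le_ceil _
  have hub : ∀ u, (n u : ℝ) ≤ N₀ * R.P u + 1 := fun u =>
    (Nat.ceil_lt_add_one (by have := R.P_nonneg u; positivity)).le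
  have hNcast : (N:ℝ) = ∑ u, (n u : ℝ) := by rw [hNdef]; push_cast; rfl
  have hNlb : (N₀:ℝ) ≤ N := by
    rw [hNcast]
    calc (N₀:ℝ) = ∑ u, (N₀:ℝ) * R.P u := by
          rw [← Finset.mul_sum, hsum, mul_one]
      _ ≤ ∑ u, (n u : ℝ) := Finset.sum_le_sum fun u _ => hlb u
  have hNub : (N:ℝ) ≤ N₀ + c := by
    rw [hNcast]
    calc ∑ u, (n u : ℝ) ≤ ∑ u, ((N₀:ℝ) * R.P u + 1) :=
          Finset.sum_le_sum fun u _ => hub u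
      _ = N₀ + c := by
          rw [Finset.sum_add_distrib, ← Finset.mul_sum, hsum, mul_one]
          simp [hc]
  have hNpos : (0:ℝ) < N := lt_of_lt_of_le hN₀pos hNlb
  -- the per-unit error bound
  have herr : ∀ u, |(n u : ℝ)/N - R.P u| ≤ c / N₀ := by
    intro u
    rw [abs_le]
    constructor
    · rw [neg_le, neg_sub]
      have h1 : (N₀:ℝ) * R.P u / N ≤ (n u : ℝ)/N := by gcongr; exact hlb u
      have h2 : R.P u - (N₀:ℝ) * R.P u / N = R.P u * ((N - N₀)/N) := by
        field_simp
      calc R.P u - (n u : ℝ)/N ≤ R.P u - (N₀:ℝ) * R.P u / N := by linarith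
        _ = R.P u * ((N - N₀)/N) := h2
        _ ≤ 1 * ((N - N₀)/N) := by
            apply mul_le_mul_of_nonneg_right (hPle u)
            apply div_nonneg (by linarith) hNpos.le
        _ = (N - N₀)/N := one_mul _
        _ ≤ (c:ℝ)/N := by gcongr; linarith
        _ ≤ (c:ℝ)/N₀ := by gcongr
    · have h1 : (n u : ℝ)/N ≤ ((N₀:ℝ) * R.P u + 1)/N := by gcongr; exact hub u
      have h2 : ((N₀:ℝ) * R.P u + 1)/N = (N₀:ℝ) * R.P u / N + 1/N := by ring
      have h3 : (N₀:ℝ) * R.P u / N ≤ R.P u := by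
        rw [div_le_iff₀ hNpos]
        have := R.P_nonneg u
        nlinarith
      have h4 : (1:ℝ)/N ≤ 1/N₀ := by gcongr
      have h5 : (1:ℝ)/N₀ ≤ c/N₀ := by gcongr; exact_mod_cast hc1
      linarith
  -- construct the RCM
  refine ⟨Σ u : U, Fin (n u), inferInstance,
    { O := R.O
      F := fun o p => R.F o p.1
      P := fun _ => 1/N
      P_nonneg := fun _ => by positivity
      P_sum := ?_ }, rfl, fun _ _ => rfl, ?_⟩
  · rw [finsum_eq_sum_of_fintype, Finset.sum_const, Finset.card_univ]
    rw [Fintype.card_sigma]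
    simp only [Fintype.card_fin]
    rw [← hNdef, nsmul_eq_mul]
    field_simp
  · intro g
    have hcf' : (∑ᶠ p : Σ u : U, Fin (n u),
        if ∀ o : R.O, R.F o.1 p.1 = g o then (1:ℝ)/N else 0) =
        ∑ u, (if ∀ o : R.O, R.F o.1 u = g o then (n u : ℝ)/N else 0) := by
      rw [finsum_eq_sum_of_fintype, ← Finset.univ_sigma_univ, Finset.sum_sigma]
      apply Finset.sum_congr rfl
      intro u _
      have hr : ∀ s : Fin (n u),
          (if ∀ o : R.O, R.F o.1 (⟨u, s⟩ : Σ u : U, Fin (n u)).1 = g o then (1:ℝ)/N else 0) =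
          (if ∀ o : R.O, R.F o.1 u = g o then (1:ℝ)/N else 0) := fun s => rfl
      rw [Finset.sum_congr rfl fun s _ => hr s, Finset.sum_const, Finset.card_univ,
        Fintype.card_fin, nsmul_eq_mul]
      split <;> simp [mul_one_div, div_eq_mul_inv]
    have hcf : R.cf g = ∑ u, (if ∀ o : R.O, R.F o.1 u = g o then R.P u else 0) := by
      rw [RCM.cf, RCM.cfOn, finsum_eq_sum_of_fintype]
    rw [RCM.cfOn, hcf', hcf, ← Finset.sum_sub_distrib]
    have hbd : ∀ u : U, |(if ∀ o : R.O, R.F o.1 u = g o then (n u : ℝ)/N else 0) -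
        (if ∀ o : R.O, R.F o.1 u = g o then R.P u else 0)| ≤ (c:ℝ)/N₀ := by
      intro u
      split
      · exact herr u
      · rw [sub_self, abs_zero]; positivity
    refine le_trans (Finset.abs_sum_le_sum_abs _ _) ?_
    refine le_trans (Finset.sum_le_sum fun u _ => hbd u) ?_
    rw [Finset.sum_const, Finset.card_univ, nsmul_eq_mul, ← hc]
    rw [mul_div_assoc', div_le_iff₀ hN₀pos]
    have h1 : (c:ℝ)^2/ε ≤ N₀ := by
      calc (c:ℝ)^2/ε ≤ ⌈(c:ℝ)^2/ε⌉₊ := Nat.le_ceil _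
        _ ≤ N₀ := Nat.cast_le.mpr (le_max_right 1 _)
    have h2 : (c:ℝ)^2 ≤ ε * N₀ := by
      rw [div_le_iff₀ hε] at h1; linarith
    nlinarith
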